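/- Flux part of the weak positivity for the high-order well-balanced DG scheme with the modified Lax–Friedrichs flux (key step in the proof of Theorem B.2): let U⁻_{j−1/2}, U⁺_{j−1/2}, U⁻_{j+1/2}, U⁺_{j+1/2} ∈ G (the exterior/interior traces at the left interface and the interior/exterior traces at the right interface), let ρ^{e,−}_{j−1/2}, ρ^{e,+}_{j−1/2}, ρ^{e,−}_{j+1/2}, ρ^{e,+}_{j+1/2} > 0, let ρ^{e,max}_{j−1/2} ≥ max{ρ^{e,−}_{j−1/2}, ρ^{e,+}_{j−1/2}} and ρ^{e,max}_{j+1/2} ≥ max{ρ^{e,−}_{j+1/2}, ρ^{e,+}_{j+1/2}}, and set the viscosity parameters α^{LF}_{j−1/2} = max{α_max(U⁻_{j−1/2}), α_max(U⁺_{j−1/2})} and α^{LF}_{j+1/2} = max{α_max(U⁻_{j+1/2}), α_max(U⁺_{j+1/2})}. Define the modified Lax–Friedrichs fluxes F̂_{j+1/2} = ½[F(U⁻_{j+1/2}) + F(U⁺_{j+1/2}) − α^{LF}_{j+1/2} ρ^{e,max}_{j+1/2} (U⁺_{j+1/2}/ρ^{e,+}_{j+1/2} − U⁻_{j+1/2}/ρ^{e,−}_{j+1/2})]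 and F̂_{j−1/2} = ½[F(U⁻_{j−1/2}) + F(U⁺_{j−1/2}) − α^{LF}_{j−1/2} ρ^{e,max}_{j−1/2} (U⁺_{j−1/2}/ρ^{e,+}_{j−1/2} − U⁻_{j−1/2}/ρ^{e,−}_{j−1/2})], and set α̃^F = max{ρ^{e,max}_{j+1/2}/ρ^{e,−}_{j+1/2}, ρ^{e,max}_{j−1/2}/ρ^{e,+}_{j−1/2}} · max{α_max(U) : U ∈ {U⁻_{j−1/2}, U⁺_{j−1/2}, U⁻_{j+1/2}, U⁺_{j+1/2}}}. Then for any η ∈ (0,1], ω̂₁ > 0, h > 0, and Δt > 0 with Δt·α̃^F ≤ η ω̂₁ h, one has η ω̂₁ (U⁺_{j−1/2} + U⁻_{j+1/2}) − (Δt/h)(F̂_{j+1/2} − F̂_{j−1/2}) ∈ G. -/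

import Mathlib

noncomputable section

/-- A 1D state `U = (ρ, m, E)`. -/
abbrev St : Type := ℝ × ℝ × ℝ

/-- The admissible set `G = {(ρ, m, E) : ρ > 0, E − m²/(2ρ) > 0}`. -/
def admG : Set St := {U | 0 < U.1 ∧ 0 < U.2.2 - U.2.1 ^ 2 / (2 * U.1)}

/-- The velocity `u = m/ρ`. -/
def vel (U : St) : ℝ := U.2.1 / U.1

/-- The pressure `p = (γ−1)(E − m²/(2ρ))`. -/
def press (γ : ℝ) (U : St) : ℝ := (γ - 1) * (U.2.2 - U.2.1 ^ 2 / (2 * U.1))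

/-- The specific internal energy `e = (E − m²/(2ρ))/ρ`. -/
def specE (U : St) : ℝ := (U.2.2 - U.2.1 ^ 2 / (2 * U.1)) / U.1

/-- The Euler flux `F(U) = (ρu, ρu² + p, (E+p)u)`. -/
def eulerF (γ : ℝ) (U : St) : St :=
  (U.1 * vel U, U.1 * vel U ^ 2 + press γ U, (U.2.2 + press γ U) * vel U)

/-- `α_max(U) = |u| + √(γp/ρ)`. -/
def alphaMax (γ : ℝ) (U : St) : ℝ := |vel U| + Real.sqrt (γ * press γ U / U.1)

end

/-! The admissible set `G` is a convex cone, and for `U ∈ G` and `β ≥ α_max(U)` both `β U - F(U)`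
and `β U + F(U)` lie in `G`; the second follows from the first by reversing the momentum.
With `β^± = ρ^{e,max} α^{LF} / ρ^{e,±} ≥ α_max(U^±)`, the modified Lax–Friedrichs flux at an
interface equals `β⁻ U⁻ - ½ [(β⁻ U⁻ - F(U⁻)) + (β⁺ U⁺ - F(U⁺))]` and also
`½ [(β⁻ U⁻ + F(U⁻)) + (β⁺ U⁺ + F(U⁺))] - β⁺ U⁺`. Using the first form on the right interface and
the second on the left, the update is a combination of `U⁺_{j-1/2}` and `U⁻_{j+1/2}` with
coefficients `η ω̂₁ - (Δt/h) β`, nonnegative by the CFL condition, plus `Δt/(2h)` times four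
elements of `G`. -/

lemma mem_admG_iff {U : St} : U ∈ admG ↔ 0 < U.1 ∧ U.2.1 ^ 2 < 2 * U.1 * U.2.2 := by
  refine and_congr_right fun hρ => ?_
  rw [sub_pos, div_lt_iff₀ (by positivity)]
  constructor <;> intro h <;> linarith

def admCone : ConvexCone ℝ St where
  carrier := admG
  smul_mem' c hc U hU := by
    obtain ⟨ρ, m, E⟩ := U
    obtain ⟨hρ, hq⟩ : 0 < ρ ∧ m ^ 2 < 2 * ρ * E := mem_admG_iff.1 hU
    refine mem_admG_iff.2 ⟨mul_pos hc hρ, ?_⟩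
    simp only [Prod.smul_mk, smul_eq_mul]
    nlinarith [mul_lt_mul_of_pos_left hq (mul_pos hc hc)]
  add_mem' U hU V hV := by
    obtain ⟨ρ, m, E⟩ := U
    obtain ⟨σ, n, F⟩ := V
    obtain ⟨hρ, hq⟩ : 0 < ρ ∧ m ^ 2 < 2 * ρ * E := mem_admG_iff.1 hU
    obtain ⟨hσ, hr⟩ : 0 < σ ∧ n ^ 2 < 2 * σ * F := mem_admG_iff.1 hV
    refine mem_admG_iff.2 ⟨add_pos hρ hσ, ?_⟩
    simp only [Prod.mk_add_mk]
    nlinarith [sq_nonneg (m * σ - n * ρ), mul_lt_mul_of_pos_right hq (mul_pos hσ (add_pos hρ hσ)),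
      mul_lt_mul_of_pos_right hr (mul_pos hρ (add_pos hρ hσ)), mul_pos hρ hσ]

lemma ConvexCone.nonneg_smul_add_mem {𝕜 E : Type*} [Semiring 𝕜] [PartialOrder 𝕜]
    [AddCommMonoid E] [Module 𝕜 E] (K : ConvexCone 𝕜 E) {a : 𝕜} (ha : 0 ≤ a) {x y : E}
    (hx : x ∈ K) (hy : y ∈ K) : a • x + y ∈ K := by
  rcases ha.eq_or_lt with rfl | ha
  · simpa using hy
  · exact K.add_mem (K.smul_mem ha hx) hy

lemma smul_sub_eulerF_mem_admG {γ α : ℝ} (hγ : 1 < γ) {U : St} (hU : U ∈ admG)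
    (hα : alphaMax γ U ≤ α) : α • U - eulerF γ U ∈ admG := by
  obtain ⟨ρ, m, E⟩ := U
  obtain ⟨hρ, hε⟩ := hU
  obtain ⟨u, rfl⟩ : ∃ u, m = ρ * u := ⟨m / ρ, by field_simp⟩
  obtain ⟨ε, rfl⟩ : ∃ ε, E = ε + ρ * u ^ 2 / 2 := ⟨E - ρ * u ^ 2 / 2, by ring⟩
  have hmass : (ρ * u) ^ 2 / (2 * ρ) = ρ * u ^ 2 / 2 := by field_simp
  simp only [hmass, add_sub_cancel_right] at hε
  have hvel : vel (ρ, ρ * u, ε + ρ * u ^ 2 / 2) = u := by simp [vel, hρ.ne']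
  have hpress : press γ (ρ, ρ * u, ε + ρ * u ^ 2 / 2) = (γ - 1) * ε := by
    simp only [press, hmass, add_sub_cancel_right]
  set c := Real.sqrt (γ * ((γ - 1) * ε) / ρ)
  have hc : 0 < c := Real.sqrt_pos.2 (by have := sub_pos.2 hγ; positivity)
  have hcu : c ≤ α - u := by
    simp only [alphaMax, hvel, hpress] at hα
    linarith [le_abs_self u]
  have hcsq : γ * (γ - 1) * ε ≤ ρ * (α - u) ^ 2 := by
    have := (Real.sqrt_le_left (hc.le.trans hcu)).1 hcu
    rw [div_le_iff₀ hρ] at this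
    linarith
  -- with `s = α - u ≥ c`, the energy condition reads `2 ρ ε s² > p²`, and `ρ s² ≥ ρ c² = γ p`
  simp only [eulerF, hvel, hpress]
  refine mem_admG_iff.2 ⟨?_, ?_⟩
  · simp only [Prod.fst_sub, Prod.smul_fst, smul_eq_mul]
    nlinarith
  · simp only [Prod.fst_sub, Prod.snd_sub, Prod.smul_fst, Prod.smul_snd, smul_eq_mul]
    have hγε : (γ - 1) ^ 2 * ε ^ 2 < 2 * ε * (γ * (γ - 1) * ε) := by
      nlinarith [mul_pos (mul_pos (sub_pos.2 hγ) (by linarith : (0:ℝ) < γ + 1)) (mul_pos hε hε)]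
    nlinarith [mul_le_mul_of_nonneg_left hcsq (by positivity : (0:ℝ) ≤ 2 * ε)]

def flipMomentum (U : St) : St := (U.1, -U.2.1, U.2.2)

lemma flipMomentum_mem_admG {U : St} (hU : U ∈ admG) : flipMomentum U ∈ admG :=
  mem_admG_iff.2 (by simpa [flipMomentum] using mem_admG_iff.1 hU)

lemma alphaMax_flipMomentum (γ : ℝ) (U : St) : alphaMax γ (flipMomentum U) = alphaMax γ U := by
  simp [alphaMax, vel, press, flipMomentum, neg_div]

lemma smul_add_eulerF_eq (γ α : ℝ) (U : St) :
    α • U + eulerF γ U = flipMomentum (α • flipMomentum U - eulerF γ (flipMomentum U)) := by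
  obtain ⟨ρ, m, E⟩ := U
  simp only [flipMomentum, eulerF, vel, press, Prod.smul_mk, Prod.mk_add_mk, Prod.mk_sub_mk,
    smul_eq_mul, neg_div, neg_sq]
  ext <;> simp only <;> ring

lemma smul_add_eulerF_mem_admG {γ α : ℝ} (hγ : 1 < γ) {U : St} (hU : U ∈ admG)
    (hα : alphaMax γ U ≤ α) : α • U + eulerF γ U ∈ admG := by
  rw [smul_add_eulerF_eq]
  exact flipMomentum_mem_admG (smul_sub_eulerF_mem_admG hγ (flipMomentum_mem_admG hU)
    ((alphaMax_flipMomentum γ U).trans_le hα))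

lemma alphaMax_nonneg (γ : ℝ) (U : St) : 0 ≤ alphaMax γ U :=
  add_nonneg (abs_nonneg _) (Real.sqrt_nonneg _)

lemma le_div_mul_of_le {a α ρ ρmax : ℝ} (ha : a ≤ α) (hα : 0 ≤ α) (hρ : 0 < ρ)
    (hρmax : ρ ≤ ρmax) : a ≤ ρmax / ρ * α :=
  ha.trans (le_mul_of_one_le_left hα ((one_le_div hρ).2 hρmax))

noncomputable def modLF (γ ρmax ρem ρep : ℝ) (Um Up : St) : St :=
  (1 / 2 : ℝ) • (eulerF γ Um + eulerF γ Up
    - (max (alphaMax γ Um) (alphaMax γ Up) * ρmax) • (ρep⁻¹ • Up - ρem⁻¹ • Um))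

section modLF

variable (γ ρmax ρem ρep : ℝ) (Um Up : St)

local notation "α" => max (alphaMax γ Um) (alphaMax γ Up)

lemma modLF_eq_smul_sub :
    modLF γ ρmax ρem ρep Um Up = (ρmax / ρem * α) • Um
      - (1 / 2 : ℝ) • ((ρmax / ρem * α) • Um - eulerF γ Um
        + ((ρmax / ρep * α) • Up - eulerF γ Up)) := by
  unfold modLF
  module

lemma modLF_eq_sub_smul :
    modLF γ ρmax ρem ρep Um Up = (1 / 2 : ℝ) • ((ρmax / ρem * α) • Um + eulerF γ Um
        + ((ρmax / ρep * α) • Up + eulerF γ Up)) - (ρmax / ρep * α) • Up := by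
  unfold modLF
  module

variable {γ ρmax ρem ρep Um Up}

lemma smul_sub_eulerF_add_mem_admCone (hγ : 1 < γ) (hUm : Um ∈ admG) (hUp : Up ∈ admG)
    (hρem : 0 < ρem) (hρep : 0 < ρep) (hρmax : max ρem ρep ≤ ρmax) :
    (ρmax / ρem * α) • Um - eulerF γ Um + ((ρmax / ρep * α) • Up - eulerF γ Up) ∈ admCone := by
  have hα : 0 ≤ α := (alphaMax_nonneg γ Um).trans (le_max_left _ _)
  exact admCone.add_mem
    (smul_sub_eulerF_mem_admG hγ hUm
      (le_div_mul_of_le (le_max_left _ _) hα hρem (le_of_max_le_left hρmax)))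
    (smul_sub_eulerF_mem_admG hγ hUp
      (le_div_mul_of_le (le_max_right _ _) hα hρep (le_of_max_le_right hρmax)))

lemma smul_add_eulerF_add_mem_admCone (hγ : 1 < γ) (hUm : Um ∈ admG) (hUp : Up ∈ admG)
    (hρem : 0 < ρem) (hρep : 0 < ρep) (hρmax : max ρem ρep ≤ ρmax) :
    (ρmax / ρem * α) • Um + eulerF γ Um + ((ρmax / ρep * α) • Up + eulerF γ Up) ∈ admCone := by
  have hα : 0 ≤ α := (alphaMax_nonneg γ Um).trans (le_max_left _ _)
  exact admCone.add_mem
    (smul_add_eulerF_mem_admG hγ hUm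
      (le_div_mul_of_le (le_max_left _ _) hα hρem (le_of_max_le_left hρmax)))
    (smul_add_eulerF_mem_admG hγ hUp
      (le_div_mul_of_le (le_max_right _ _) hα hρep (le_of_max_le_right hρmax)))

end modLF

lemma ConvexCone.smul_add_sub_smul_sub_mem {E : Type*} [AddCommGroup E] [Module ℝ E]
    (K : ConvexCone ℝ E) {c lam βl βr : ℝ} {Ul Ur Gl Gr : E} (hlam : 0 < lam)
    (hl : lam * βl ≤ c) (hr : lam * βr ≤ c) (hUl : Ul ∈ K) (hUr : Ur ∈ K) (hGl : Gl ∈ K)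
    (hGr : Gr ∈ K) :
    c • (Ul + Ur) - lam • ((βr • Ur - (1 / 2 : ℝ) • Gr) - ((1 / 2 : ℝ) • Gl - βl • Ul)) ∈ K := by
  have hdecomp : c • (Ul + Ur) - lam • ((βr • Ur - (1 / 2 : ℝ) • Gr) - ((1 / 2 : ℝ) • Gl - βl • Ul))
      = (c - lam * βl) • Ul + ((c - lam * βr) • Ur + (lam / 2) • (Gl + Gr)) := by
    module
  rw [hdecomp]
  exact K.nonneg_smul_add_mem (sub_nonneg.2 hl) hUl (K.nonneg_smul_add_mem (sub_nonneg.2 hr) hUr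
    (K.smul_mem (half_pos hlam) (K.add_mem hGl hGr)))

theorem high_order_WB_LF_flux_positivity_general (γ : ℝ) (hγ : 1 < γ)
    -- interface traces: `Uml, Upl` at the left interface, `Umr, Upr` at the right
    (Uml Upl Umr Upr : St)
    (hUml : Uml ∈ admG) (hUpl : Upl ∈ admG) (hUmr : Umr ∈ admG) (hUpr : Upr ∈ admG)
    -- equilibrium interface traces
    (ρeml ρepl ρemr ρepr : ℝ)
    (hρeml : 0 < ρeml) (hρepl : 0 < ρepl) (hρemr : 0 < ρemr) (hρepr : 0 < ρepr)
    (ρmaxl ρmaxr : ℝ) (hρmaxl : max ρeml ρepl ≤ ρmaxl) (hρmaxr : max ρemr ρepr ≤ ρmaxr)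
    (η ωhat₁ h Δt : ℝ)
    (hh : 0 < h) (hΔt : 0 < Δt)
    (hcfl :
      Δt * (max (ρmaxr / ρemr) (ρmaxl / ρepl) *
          max (max (alphaMax γ Uml) (alphaMax γ Upl))
            (max (alphaMax γ Umr) (alphaMax γ Upr))) ≤ η * ωhat₁ * h) :
    (η * ωhat₁) • (Upl + Umr) - (Δt / h) •
        ((1 / 2 : ℝ) • (eulerF γ Umr + eulerF γ Upr
            - (max (alphaMax γ Umr) (alphaMax γ Upr) * ρmaxr) •
                (ρepr⁻¹ • Upr - ρemr⁻¹ • Umr))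
          - (1 / 2 : ℝ) • (eulerF γ Uml + eulerF γ Upl
            - (max (alphaMax γ Uml) (alphaMax γ Upl) * ρmaxl) •
                (ρepl⁻¹ • Upl - ρeml⁻¹ • Uml))) ∈ admG := by
  set αl := max (alphaMax γ Uml) (alphaMax γ Upl)
  set αr := max (alphaMax γ Umr) (alphaMax γ Upr)
  have hcfl' : ∀ β ≤ max (ρmaxr / ρemr) (ρmaxl / ρepl) * max αl αr, Δt / h * β ≤ η * ωhat₁ := by
    intro β hβ
    rw [div_mul_eq_mul_div, div_le_iff₀ hh]
    exact (mul_le_mul_of_nonneg_left hβ hΔt.le).trans hcfl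
  have hratio : 0 ≤ max (ρmaxr / ρemr) (ρmaxl / ρepl) :=
    le_max_of_le_left (div_nonneg (hρemr.le.trans (le_of_max_le_left hρmaxr)) hρemr.le)
  have hαl : 0 ≤ αl := (alphaMax_nonneg γ Uml).trans (le_max_left _ _)
  have hαr : 0 ≤ αr := (alphaMax_nonneg γ Umr).trans (le_max_left _ _)
  change (η * ωhat₁) • (Upl + Umr) - (Δt / h) •
    (modLF γ ρmaxr ρemr ρepr Umr Upr - modLF γ ρmaxl ρeml ρepl Uml Upl) ∈ admCone
  rw [modLF_eq_smul_sub, modLF_eq_sub_smul]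
  exact admCone.smul_add_sub_smul_sub_mem (div_pos hΔt hh)
    (hcfl' _ (mul_le_mul_of_nonneg' (le_max_right _ _) (le_max_left _ _) hαl hratio))
    (hcfl' _ (mul_le_mul_of_nonneg' (le_max_left _ _) (le_max_right _ _) hαr hratio))
    hUpl hUmr
    (smul_add_eulerF_add_mem_admCone hγ hUml hUpl hρeml hρepl hρmaxl)
    (smul_sub_eulerF_add_mem_admCone hγ hUmr hUpr hρemr hρepr hρmaxr)

/-- key step of Theorem B.2: flux part of the weak positivity for
the high-order well-balanced DG scheme with the modified Lax–Friedrichs flux. -/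
theorem high_order_WB_LF_flux_positivity (γ : ℝ) (hγ : 1 < γ)
    -- interface traces: `Uml, Upl` at the left interface, `Umr, Upr` at the right
    (Uml Upl Umr Upr : St)
    (hUml : Uml ∈ admG) (hUpl : Upl ∈ admG) (hUmr : Umr ∈ admG) (hUpr : Upr ∈ admG)
    -- equilibrium interface traces
    (ρeml ρepl ρemr ρepr : ℝ)
    (hρeml : 0 < ρeml) (hρepl : 0 < ρepl) (hρemr : 0 < ρemr) (hρepr : 0 < ρepr)
    (ρmaxl ρmaxr : ℝ) (hρmaxl : max ρeml ρepl ≤ ρmaxl) (hρmaxr : max ρemr ρepr ≤ ρmaxr)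
    (η ωhat₁ h Δt : ℝ) (hη₀ : 0 < η) (hη₁ : η ≤ 1) (hωhat₁ : 0 < ωhat₁)
    (hh : 0 < h) (hΔt : 0 < Δt)
    (hcfl :
      Δt * (max (ρmaxr / ρemr) (ρmaxl / ρepl) *
          max (max (alphaMax γ Uml) (alphaMax γ Upl))
            (max (alphaMax γ Umr) (alphaMax γ Upr))) ≤ η * ωhat₁ * h) :
    (η * ωhat₁) • (Upl + Umr) - (Δt / h) •
        ((1 / 2 : ℝ) • (eulerF γ Umr + eulerF γ Upr
            - (max (alphaMax γ Umr) (alphaMax γ Upr) * ρmaxr) •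
                (ρepr⁻¹ • Upr - ρemr⁻¹ • Umr))
          - (1 / 2 : ℝ) • (eulerF γ Uml + eulerF γ Upl
            - (max (alphaMax γ Uml) (alphaMax γ Upl) * ρmaxl) •
                (ρepl⁻¹ • Upl - ρeml⁻¹ • Uml))) ∈ admG :=
  high_order_WB_LF_flux_positivity_general γ hγ Uml Upl Umr Upr hUml hUpl hUmr hUpr ρeml ρepl ρemr
    ρepr hρeml hρepl hρemr hρepr ρmaxl ρmaxr hρmaxl hρmaxr η ωhat₁ h Δt hh hΔt hcfl
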